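/- arXiv:2404.18215 — 3 statements merged into one kernel-verified Lean document; each statement's English description precedes it below -/
import Mathlib

section
/- Let n ≥ 2. An element c of the symmetric group S_n is a Coxeter element if and only if c is an n-cycle that can be written as c = (c_1, c_2, …, c_m, c_{m+1}, …, c_n) for some 1 ≤ m ≤ n, where c_1 = 1 < c_2 < … < c_m = n and n = c_m > c_{m+1} > … > c_n > 1. -/
noncomputable section

namespace RSKPaper

/-! ### Directed graphs, paths and Greene–Kleitman invariants -/

/-- A path in the directed graph with vertex set `V` and arrow relation `A`:
a nonempty list of vertices of `V`, consecutive ones joined by arrows. -/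
def IsPath {α : Type*} (V : Set α) (A : α → α → Prop) (l : List α) : Prop :=
  l ≠ [] ∧ (∀ v ∈ l, v ∈ V) ∧ l.Chain' A

/-- The `f`-weight of an `ℓ`-tuple of paths: the sum of `f` over the union of
the supports of the paths. -/
def wt {α : Type*} [DecidableEq α] (f : α → ℕ) {ℓ : ℕ} (γ : Fin ℓ → List α) : ℕ :=
  ∑ v ∈ Finset.univ.biUnion (fun i => (γ i).toFinset), f v

/-- `MGK V A f ℓ` is `M_ℓ^G(f)`: the maximal `f`-weight of an `ℓ`-tuple of paths
in the graph `G = (V, A)` (and `0` for `ℓ = 0`). -/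
def MGK {α : Type*} [DecidableEq α] (V : Set α) (A : α → α → Prop) (f : α → ℕ) (ℓ : ℕ) : ℕ :=
  sSup {w | ∃ γ : Fin ℓ → List α, (∀ i, IsPath V A (γ i)) ∧ w = wt f γ}

/-- The Greene–Kleitman invariant, `0`-indexed: `GK V A f k` is the `(k+1)`-st
part `M_{k+1}^G(f) - M_k^G(f)` of `GK_G(f)`. -/
def GK {α : Type*} [DecidableEq α] (V : Set α) (A : α → α → Prop) (f : α → ℕ) (k : ℕ) : ℕ :=
  MGK V A f (k + 1) - MGK V A f k

/-! ### Integer partitions, Ferrers diagrams, diagonals -/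

/-- `lam : ℕ → ℕ` (with `lam i` the `i`-th part for `i ≥ 1`) is an integer partition:
weakly decreasing with finitely many nonzero terms. -/
def IsPartition (lam : ℕ → ℕ) : Prop :=
  (∀ i, 1 ≤ i → lam (i + 1) ≤ lam i) ∧ ∃ N, ∀ i, N ≤ i → lam i = 0

/-- The Ferrers diagram: pairs of positive integers `(i, j)` with `j ≤ lam i`. -/
def Fer (lam : ℕ → ℕ) : Set (ℕ × ℕ) := {p | 1 ≤ p.1 ∧ 1 ≤ p.2 ∧ p.2 ≤ lam p.1}

/-- The hook length `h_λ(1,1)` of the box `(1,1)`. -/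
def hook11 (lam : ℕ → ℕ) : ℕ := {p ∈ Fer lam | p.1 = 1 ∨ p.2 = 1}.ncard

/-- The `m`-th diagonal `D_m(λ)`. -/
def diag (lam : ℕ → ℕ) (m : ℤ) : Set (ℕ × ℕ) :=
  {p ∈ Fer lam | (p.1 : ℤ) - (p.2 : ℤ) + (lam 1 : ℤ) = m}

/-- The arrows of the graph `G_λ`. -/
def GArrow (lam : ℕ → ℕ) (p q : ℕ × ℕ) : Prop :=
  p ∈ Fer lam ∧ q ∈ Fer lam ∧ (q = (p.1 + 1, p.2) ∨ q = (p.1, p.2 + 1))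

/-- The order ideal of `Fer lam` generated by `uv` (the vertex set of `G_λ(m)`
when `uv` is the maximal box of the `m`-th diagonal). -/
def ideal (lam : ℕ → ℕ) (uv : ℕ × ℕ) : Set (ℕ × ℕ) := {p ∈ Fer lam | p ≤ uv}

/-! ### Fillings and reverse plane partitions -/

/-- A filling of shape `λ`. -/
def Filling (lam : ℕ → ℕ) : Type := Fer lam → ℕ

/-- Extend a filling of shape `λ` by zero to all of `ℕ × ℕ`. -/
def extendF (lam : ℕ → ℕ) (f : Filling lam) : ℕ × ℕ → ℕ :=
  Function.extend Subtype.val f (fun _ => 0)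

/-- A reverse plane partition: a filling weakly increasing for the
componentwise order. -/
def IsRPP (lam : ℕ → ℕ) (g : Filling lam) : Prop :=
  ∀ p q : Fer lam, (p : ℕ × ℕ) ≤ (q : ℕ × ℕ) → g p ≤ g q

/-- `Φ` is the map `RSK_λ` of Gansner: for every box `p` on the `m`-th diagonal,
whose maximal box is `uv`, the value of `Φ f` at `p` is the `(u_m - i + 1)`-st part
(1-indexed; `u_m - i` with our 0-indexed `GK`) of the Greene–Kleitman invariant of
`f` on `G_λ(m)`. -/
def IsGansnerRSK (lam : ℕ → ℕ) (Φ : Filling lam → Filling lam) : Prop :=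
  ∀ (f : Filling lam) (m : ℤ) (uv : ℕ × ℕ), IsGreatest (diag lam m) uv →
    ∀ p, ∀ hp : p ∈ diag lam m,
      Φ f ⟨p, hp.1⟩ = GK (ideal lam uv) (GArrow lam) (extendF lam f) (uv.1 - p.1)

/-! ### Interval bipartitions -/

/-- `(B, E)` is an interval bipartition: disjoint subsets of the positive integers
whose union is an integer interval `{i, …, j}` with `1 ≤ i ≤ j`. -/
def IsIntervalBipartition (B E : Finset ℕ) : Prop :=
  Disjoint B E ∧ ∃ i j, 1 ≤ i ∧ i ≤ j ∧ B ∪ E = Finset.Icc i j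

/-- An interval bipartition is elementary if `1 ∈ B` and `max (B ∪ E) ∈ E`. -/
def IsElementary (B E : Finset ℕ) : Prop :=
  1 ∈ B ∧ ∃ M ∈ E, ∀ x ∈ B ∪ E, x ≤ M

/-- The `i`-th smallest element (1-indexed) of a finite set of naturals
(junk value `0` out of range). -/
def nth (B : Finset ℕ) (i : ℕ) : ℕ := (B.sort (· ≤ ·)).getD (i - 1) 0

/-- The partition `λ(B, E)`: `λ(B,E)_i = #{e ∈ E | b_i < e}` for `1 ≤ i ≤ #B`,
and `0` otherwise. -/
def lamBE (B E : Finset ℕ) (i : ℕ) : ℕ :=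
  if 1 ≤ i ∧ i ≤ B.card then (E.filter (fun e => nth B i < e)).card else 0

/-! ### Symmetric groups, Coxeter elements, Auslander–Reiten quivers -/

/-- `c` lies in the copy of `S_n` inside `Equiv.Perm ℕ` permuting `{1, …, n}`. -/
def InSymm (n : ℕ) (c : Equiv.Perm ℕ) : Prop := ∀ x, x = 0 ∨ n < x → c x = x

/-- The adjacent transposition `s_i = (i, i+1)`. -/
def adjT (i : ℕ) : Equiv.Perm ℕ := Equiv.swap i (i + 1)

/-- A Coxeter element of `S_n`: a product of all of `s_1, …, s_{n-1}`, each
appearing exactly once, in some order. -/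
def IsCoxeterElement (n : ℕ) (c : Equiv.Perm ℕ) : Prop :=
  ∃ l : List ℕ, l.Perm (List.Ico 1 n) ∧ c = (l.map adjT).prod

/-- The Coxeter length of `w ∈ S_n`: the least number of adjacent transpositions
`s_1, …, s_{n-1}` needed to express `w` as a product. -/
def lenS (n : ℕ) (w : Equiv.Perm ℕ) : ℕ :=
  sInf {k | ∃ l : List ℕ, l.length = k ∧ (∀ i ∈ l, 1 ≤ i ∧ i < n) ∧ w = (l.map adjT).prod}

/-- `s_i` is initial in `w`, i.e. `ℓ(s_i w) < ℓ(w)`. -/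
def IsInitialIn (n i : ℕ) (w : Equiv.Perm ℕ) : Prop := lenS n (adjT i * w) < lenS n w

/-- `s_i` is final in `w`, i.e. `ℓ(w s_i) < ℓ(w)`. -/
def IsFinalIn (n i : ℕ) (w : Equiv.Perm ℕ) : Prop := lenS n (w * adjT i) < lenS n w

/-- The vertices of the Auslander–Reiten quiver `AR(c)`: the transpositions
`(i, j)` with `1 ≤ i < j ≤ n`. -/
def ARVertex (n : ℕ) (p : ℕ × ℕ) : Prop := 1 ≤ p.1 ∧ p.1 < p.2 ∧ p.2 ≤ n

/-- The arrows of `AR(c)`: `(i,j) → (i, c j)` whenever `i < c j`, and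
`(i,j) → (c i, j)` whenever `c i < j`. -/
def ARArrow (n : ℕ) (c : Equiv.Perm ℕ) (p q : ℕ × ℕ) : Prop :=
  ARVertex n p ∧ ARVertex n q ∧
    ((p.1 < c p.2 ∧ q = (p.1, c p.2)) ∨ (c p.1 < p.2 ∧ q = (c p.1, p.2)))

/-- The vertex set of the full subquiver `AR_m(c)`: transpositions `(i, j)`
with `i ≤ m < j`. -/
def ARmSet (n m : ℕ) : Set (ℕ × ℕ) := {p | ARVertex n p ∧ p.1 ≤ m ∧ m < p.2}

/-- The labelling of the box `(i, j)` of `Fer λ(B,E)` by the transposition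
`(b_i, e_{q-j+1})`. -/
def boxToTransp (B E : Finset ℕ) (p : ℕ × ℕ) : ℕ × ℕ :=
  (nth B p.1, nth E (E.card - p.2 + 1))

/-- `fbar` is the filling `f̄` of `AR(c)` associated to the filling `f` of shape `λ`:
`f̄(b_i, e_{q-j+1}) = f (i, j)` for boxes `(i,j) ∈ Fer λ`, and `f̄ = 0` elsewhere. -/
def IsBarOf (lam : ℕ → ℕ) (B E : Finset ℕ) (f : Filling lam) (fbar : ℕ × ℕ → ℕ) : Prop :=
  (∀ p : Fer lam, fbar (boxToTransp B E (p : ℕ × ℕ)) = f p) ∧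
  (∀ x : ℕ × ℕ, (∀ p : Fer lam, x ≠ boxToTransp B E (p : ℕ × ℕ)) → fbar x = 0)

/-- `Φ` is the map `RSK_{λ,c}`: for every box `p` on the `m`-th diagonal of `λ`,
whose maximal box is `uv`, the value of `Φ f` at `p` is the `(u_m - i + 1)`-st part
(1-indexed; `u_m - i` with our 0-indexed `GK`) of the Greene–Kleitman invariant
of `f̄` on `AR_m(c)`. -/
def IsCoxRSK (lam : ℕ → ℕ) (B E : Finset ℕ) (n : ℕ) (c : Equiv.Perm ℕ)
    (Φ : Filling lam → Filling lam) : Prop :=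
  ∀ (f : Filling lam) (fbar : ℕ × ℕ → ℕ), IsBarOf lam B E f fbar →
    ∀ m : ℕ, 1 ≤ m → m ≤ n - 1 →
      ∀ uv : ℕ × ℕ, IsGreatest (diag lam (m : ℤ)) uv →
        ∀ p, ∀ hp : p ∈ diag lam (m : ℤ),
          Φ f ⟨p, hp.1⟩ = GK (ARmSet n m) (ARArrow n c) fbar (uv.1 - p.1)


/-! Since `s_n` occurs exactly once in a Coxeter word of `S_{n+1}` and commutes with every `s_i`
except `s_{n-1}`, a Coxeter element of `S_{n+1}` is `c' s_n` or `s_n c'` for a Coxeter element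
`c'` of `S_n`, according as `s_{n-1}` occurs before or after `s_n`. On cycles, `c' s_n` and
`s_n c'` are the cycle of `c'` with `n + 1` inserted just after, resp. just before, `n`; this
keeps a unimodal cycle unimodal, and conversely in a unimodal cycle the entry `n` always sits
next to the peak `n + 1`, so deleting `n + 1` is the inverse operation. Induction from `n = 2`. -/

theorem adjT_commute {i j : ℕ} (h : i + 1 < j) : Commute (adjT i) (adjT j) :=
  (Equiv.Perm.disjoint_swap_swap (by simp; omega)).commute

theorem commute_adjT_prod {n : ℕ} {l : List ℕ} (hl : ∀ i ∈ l, i + 1 < n) :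
    Commute (adjT n) (l.map adjT).prod :=
  Commute.list_prod_right _ _ <| by simpa using fun i hi => (adjT_commute (hl i hi)).symm

theorem isCoxeterElement_two_iff {c : Equiv.Perm ℕ} : IsCoxeterElement 2 c ↔ c = adjT 1 := by
  simp [IsCoxeterElement]

theorem isCoxeterElement_succ_iff {n : ℕ} (hn : 1 ≤ n) {c : Equiv.Perm ℕ} :
    IsCoxeterElement (n + 1) c ↔
      ∃ c', IsCoxeterElement n c' ∧ (c = c' * adjT n ∨ c = adjT n * c') := by
  have hIco : List.Ico 1 (n + 1) = List.Ico 1 n ++ [n] := List.Ico.succ_top hn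
  constructor
  · rintro ⟨l, hl, rfl⟩
    obtain ⟨l₁, l₂, rfl⟩ :=
      List.append_of_mem (hl.mem_iff.mpr (List.Ico.mem.mpr ⟨hn, n.lt_succ_self⟩))
    have hperm : (l₁ ++ l₂).Perm (List.Ico 1 n) := by
      rw [hIco] at hl
      exact (List.perm_middle.symm.trans (hl.trans (List.perm_append_singleton ..))).cons_inv
    have hlt : ∀ i ∈ l₁ ++ l₂, i < n := fun i hi =>
      (List.Ico.mem.mp (hperm.mem_iff.mp hi)).2
    have hnodup : (l₁ ++ l₂).Nodup := hperm.nodup_iff.mpr (List.Ico.nodup ..)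
    refine ⟨_, ⟨l₁ ++ l₂, hperm, rfl⟩, ?_⟩
    simp only [List.map_append, List.map_cons, List.prod_append, List.prod_cons]
    by_cases h : n - 1 ∈ l₁
    · left
      have : ∀ i ∈ l₂, i + 1 < n := fun i hi => by
        have := hlt i (by simp [hi])
        have : i ≠ n - 1 := fun hi' => List.disjoint_of_nodup_append hnodup h (hi' ▸ hi)
        omega
      rw [(commute_adjT_prod this).eq, mul_assoc]
    · right
      have : ∀ i ∈ l₁, i + 1 < n := fun i hi => by
        have := hlt i (by simp [hi])
        have : i ≠ n - 1 := fun hi' => h (hi' ▸ hi)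
        omega
      rw [← mul_assoc, ← (commute_adjT_prod this).eq, mul_assoc]
  · rintro ⟨c', ⟨l, hl, rfl⟩, rfl | rfl⟩
    · exact ⟨l ++ [n], hIco ▸ hl.append_right [n], by simp⟩
    · exact ⟨n :: l, hIco ▸ (hl.cons n).trans (List.perm_append_singleton ..).symm, by simp⟩

section FormPerm

variable {α : Type*} [DecidableEq α]

theorem formPerm_append_cons_cons_eq_mul_swap {l₁ l₂ : List α} {x y : α}
    (h : (l₁ ++ x :: y :: l₂).Nodup) :
    (l₁ ++ x :: y :: l₂).formPerm = (l₁ ++ x :: l₂).formPerm * Equiv.swap x y := by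
  have h' : (l₁ ++ x :: l₂).Nodup := h.sublist (by simp)
  calc (l₁ ++ x :: y :: l₂).formPerm = (l₂ ++ l₁ ++ [x, y]).formPerm :=
        List.formPerm_eq_of_isRotated h (by simpa using List.isRotated_append (l := l₁ ++ [x, y]))
    _ = (l₂ ++ l₁ ++ [x]).formPerm * Equiv.swap x y := List.formPerm_append_pair ..
    _ = (l₁ ++ x :: l₂).formPerm * Equiv.swap x y := by
        rw [List.formPerm_eq_of_isRotated h'
          (by simpa using List.isRotated_append (l := l₁ ++ [x])), List.append_assoc]

theorem formPerm_append_cons_cons_eq_swap_mul {l₁ l₂ : List α} {x y : α}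
    (h : (l₁ ++ y :: x :: l₂).Nodup) :
    (l₁ ++ y :: x :: l₂).formPerm = Equiv.swap y x * (l₁ ++ x :: l₂).formPerm := by
  have h' : (l₁ ++ x :: l₂).Nodup := h.sublist (by simp)
  calc (l₁ ++ y :: x :: l₂).formPerm = (y :: x :: (l₂ ++ l₁)).formPerm :=
        List.formPerm_eq_of_isRotated h (List.isRotated_append (l := l₁))
    _ = Equiv.swap y x * (x :: (l₂ ++ l₁)).formPerm := List.formPerm_cons_cons ..
    _ = Equiv.swap y x * (l₁ ++ x :: l₂).formPerm := by
        rw [List.formPerm_eq_of_isRotated h' (List.isRotated_append (l := l₁)), List.cons_append]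

theorem eq_formPerm_iff_getD {c : Equiv.Perm α} {L : List α} (x₀ : α) (hL : L.Nodup)
    (hc : ∀ x ∉ L, c x = x) :
    c = L.formPerm ↔ ∀ k < L.length, c (L.getD k x₀) = L.getD ((k + 1) % L.length) x₀ := by
  have hlt : ∀ k < L.length, (k + 1) % L.length < L.length := fun k hk => Nat.mod_lt _ (by omega)
  constructor
  · rintro rfl k hk
    rw [List.getD_eq_getElem _ _ hk, List.getD_eq_getElem _ _ (hlt k hk)]
    exact List.formPerm_apply_getElem _ hL k hk
  · intro h
    ext x
    by_cases hx : x ∈ L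
    · obtain ⟨k, hk, rfl⟩ := List.getElem_of_mem hx
      have := h k hk
      rw [List.getD_eq_getElem _ _ hk, List.getD_eq_getElem _ _ (hlt k hk)] at this
      rw [this, List.formPerm_apply_getElem _ hL]
    · rw [hc x hx, List.formPerm_apply_of_notMem hx]

end FormPerm

section ListChain

variable {α : Type*} {R : α → α → Prop} {M : List α}

theorem isChain_take_iff_getD {m : ℕ} (hm : m ≤ M.length) (x : α) :
    (M.take m).IsChain R ↔ ∀ k, k + 1 < m → R (M.getD k x) (M.getD (k + 1) x) := by
  rw [List.isChain_iff_getElem]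
  simp only [List.length_take, List.getElem_take]
  refine ⟨fun h k hk => ?_, fun h k hk => ?_⟩
  · rw [List.getD_eq_getElem _ _ (by omega), List.getD_eq_getElem _ _ (by omega)]
    exact h k (by omega)
  · have := h k (by omega)
    rwa [List.getD_eq_getElem _ _ (by omega), List.getD_eq_getElem _ _ (by omega)] at this

theorem isChain_drop_iff_getD (p : ℕ) (x : α) :
    (M.drop p).IsChain R ↔ ∀ k, p ≤ k → k + 1 < M.length → R (M.getD k x) (M.getD (k + 1) x) := by
  rw [List.isChain_iff_getElem]
  simp only [List.length_drop, List.getElem_drop]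
  refine ⟨fun h k hpk hk => ?_, fun h k hk => ?_⟩
  · obtain ⟨j, rfl⟩ : ∃ j, k = p + j := ⟨k - p, by omega⟩
    rw [List.getD_eq_getElem _ _ (by omega), List.getD_eq_getElem _ _ (by omega)]
    simpa only [Nat.add_assoc] using h j (by omega)
  · have := h (p + k) (by omega) (by omega)
    rw [List.getD_eq_getElem _ _ (by omega), List.getD_eq_getElem _ _ (by omega)] at this
    simpa only [Nat.add_assoc] using this

end ListChain

section ListOrder

variable {α : Type*} [Preorder α] {l : List α} {b x : α}

theorem le_of_pairwise_lt_concat (h : (l ++ [b]).Pairwise (· < ·)) (hx : x ∈ l ++ [b]) : x ≤ b := by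
  rcases List.mem_append.mp hx with hx | hx
  · exact ((List.pairwise_append.mp h).2.2 x hx b (List.mem_singleton_self _)).le
  · exact (List.mem_singleton.mp hx).le

theorem le_of_pairwise_gt_cons (h : (b :: l).Pairwise (· > ·)) (hx : x ∈ b :: l) : x ≤ b := by
  rcases List.mem_cons.mp hx with rfl | hx
  · exact le_rfl
  · exact ((List.pairwise_cons.mp h).1 x hx).le

end ListOrder

theorem eq_nil_of_pairwise_lt_append_cons_succ {l₁ l₂ : List ℕ} {a : ℕ}
    (h : (l₁ ++ a :: l₂ ++ [a + 1]).Pairwise (· < ·)) : l₂ = [] := by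
  refine List.eq_nil_iff_forall_not_mem.mpr fun x hx => ?_
  obtain ⟨h₁, -, h₂⟩ := List.pairwise_append.mp h
  have ha : a < x := (List.pairwise_cons.mp (List.pairwise_append.mp h₁).2.1).1 x hx
  have hx' : x < a + 1 := h₂ x (by simp [hx]) (a + 1) (List.mem_singleton_self _)
  omega

theorem eq_nil_of_pairwise_gt_succ_cons_append {l₁ l₂ : List ℕ} {a : ℕ}
    (h : ((a + 1) :: (l₁ ++ a :: l₂)).Pairwise (· > ·)) : l₁ = [] := by
  refine List.eq_nil_iff_forall_not_mem.mpr fun x hx => ?_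
  obtain ⟨h₁, h₂⟩ := List.pairwise_cons.mp h
  have hx' : x < a + 1 := h₁ x (List.mem_append_left _ hx)
  have ha : a < x := (List.pairwise_append.mp h₂).2.2 x hx a (List.mem_cons_self ..)
  omega

/-- `L` is the word `(c_1, …, c_n)` of the cycle: `1 :: u ++ [n]` is `c_1 < ⋯ < c_m` and
`n :: d ++ [1]` is `c_m > ⋯ > c_n > 1`. -/
structure IsUnimodalCycleWord (n : ℕ) (L : List ℕ) : Prop where
  nodup : L.Nodup
  length_eq : L.length = n
  exists_split : ∃ u d, L = 1 :: u ++ n :: d ∧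
    (1 :: u ++ [n]).Pairwise (· < ·) ∧ (n :: d ++ [1]).Pairwise (· > ·)

namespace IsUnimodalCycleWord

variable {n : ℕ} {L : List ℕ}

theorem mem_iff (hL : IsUnimodalCycleWord n L) {x : ℕ} : x ∈ L ↔ 1 ≤ x ∧ x ≤ n := by
  have bounds : ∀ x ∈ L, 1 ≤ x ∧ x ≤ n := by
    obtain ⟨u, d, rfl, hu, hd⟩ := hL.exists_split
    simp only [List.pairwise_append, List.pairwise_cons, List.mem_cons] at hu hd
    intro x hx
    simp only [List.cons_append, List.mem_cons, List.mem_append] at hx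
    grind
  refine ⟨bounds x, fun hx => ?_⟩
  have hsub : L ⊆ List.range' 1 n := fun y hy =>
    List.mem_range'_1.mpr (by have := bounds y hy; omega)
  have hperm : L.Perm (List.range' 1 n) :=
    (List.subperm_of_subset hL.nodup hsub).perm_of_length_le (by simp [hL.length_eq])
  exact hperm.mem_iff.mpr (List.mem_range'_1.mpr (by omega))

theorem exists_succ_formPerm_eq_mul_adjT (hL : IsUnimodalCycleWord n L) :
    ∃ L', IsUnimodalCycleWord (n + 1) L' ∧ L'.formPerm = L.formPerm * adjT n := by
  have hnot : n + 1 ∉ L := fun h => by have := (hL.mem_iff.mp h).2; omega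
  have hlen := hL.length_eq
  obtain ⟨u, d, rfl, hu, hd⟩ := hL.exists_split
  have hnd : (1 :: u ++ n :: (n + 1) :: d).Nodup := by
    simpa using (List.nodup_middle (a := n + 1) (l₁ := 1 :: u ++ [n]) (l₂ := d)).mpr <|
      List.nodup_cons.mpr ⟨by simpa using hnot, by simpa using hL.nodup⟩
  refine ⟨_, ⟨hnd, by simp at hlen ⊢; omega, u ++ [n], d, by simp, ?_, ?_⟩,
    formPerm_append_cons_cons_eq_mul_swap hnd⟩
  · exact List.pairwise_append.mpr ⟨hu, List.pairwise_singleton .., fun a ha b hb =>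
      (List.eq_of_mem_singleton hb) ▸ Nat.lt_succ_of_le (le_of_pairwise_lt_concat hu ha)⟩
  · exact List.pairwise_cons.mpr ⟨fun a ha => Nat.lt_succ_of_lt ((List.pairwise_cons.mp hd).1 a ha),
      (List.pairwise_cons.mp hd).2⟩

theorem exists_succ_formPerm_eq_adjT_mul (hL : IsUnimodalCycleWord n L) :
    ∃ L', IsUnimodalCycleWord (n + 1) L' ∧ L'.formPerm = adjT n * L.formPerm := by
  have hnot : n + 1 ∉ L := fun h => by have := (hL.mem_iff.mp h).2; omega
  have hlen := hL.length_eq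
  obtain ⟨u, d, rfl, hu, hd⟩ := hL.exists_split
  have hnd : (1 :: u ++ (n + 1) :: n :: d).Nodup :=
    List.nodup_middle.mpr (List.nodup_cons.mpr ⟨hnot, hL.nodup⟩)
  refine ⟨_, ⟨hnd, by simp at hlen ⊢; omega, u, n :: d, rfl, ?_, ?_⟩, ?_⟩
  · obtain ⟨hu₁, -, hu₂⟩ := List.pairwise_append.mp hu
    exact List.pairwise_append.mpr ⟨hu₁, List.pairwise_singleton .., fun a ha b hb =>
      (List.eq_of_mem_singleton hb) ▸ Nat.lt_succ_of_lt (hu₂ a ha n (List.mem_singleton_self _))⟩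
  · exact List.pairwise_cons.mpr
      ⟨fun a ha => Nat.lt_succ_of_le (le_of_pairwise_gt_cons hd ha), hd⟩
  · rw [formPerm_append_cons_cons_eq_swap_mul hnd, adjT, Equiv.swap_comm]

theorem exists_formPerm_eq_mul_adjT_or_adjT_mul (hn : 2 ≤ n)
    (hL : IsUnimodalCycleWord (n + 1) L) :
    ∃ L', IsUnimodalCycleWord n L' ∧
      (L.formPerm = L'.formPerm * adjT n ∨ L.formPerm = adjT n * L'.formPerm) := by
  have hlen := hL.length_eq
  have hn_mem : n ∈ L := hL.mem_iff.mpr ⟨by omega, by omega⟩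
  obtain ⟨u, d, rfl, hu, hd⟩ := hL.exists_split
  have hnodup := hL.nodup
  rcases List.mem_append.mp hn_mem with hn_u | hn_d
  · obtain ⟨u₁, u₂, rfl⟩ := List.append_of_mem ((List.mem_cons.mp hn_u).resolve_left (by omega))
    obtain rfl := eq_nil_of_pairwise_lt_append_cons_succ (l₁ := 1 :: u₁) hu
    have hnd₁ : (1 :: u₁ ++ n :: (n + 1) :: d).Nodup := by simpa using hnodup
    have hnd₂ : (1 :: u₁ ++ n :: d).Nodup := hnd₁.sublist (by simp)
    have hnotin : n ∉ d := (List.nodup_cons.mp (hnd₂.of_append_right)).1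
    refine ⟨1 :: u₁ ++ n :: d, ⟨hnd₂, by simp at hlen ⊢; omega, u₁, d, rfl, ?_, ?_⟩,
      Or.inl (by simpa [adjT] using formPerm_append_cons_cons_eq_mul_swap hnd₁)⟩
    · exact hu.sublist (by simp)
    · refine List.pairwise_cons.mpr ⟨fun a ha => ?_, (List.pairwise_cons.mp hd).2⟩
      have hlt : a < n + 1 := (List.pairwise_cons.mp hd).1 a ha
      have hne : a ≠ n := by
        rintro rfl
        rcases List.mem_append.mp ha with h | h
        · exact hnotin h
        · have := List.mem_singleton.mp h
          omega
      omega
  · obtain ⟨d₁, d₂, rfl⟩ := List.append_of_mem ((List.mem_cons.mp hn_d).resolve_left (by omega))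
    obtain rfl := eq_nil_of_pairwise_gt_succ_cons_append (l₂ := d₂ ++ [1]) (by simpa using hd)
    have hnd₂ : (1 :: u ++ n :: d₂).Nodup := hnodup.sublist (by simp)
    have hnotin : n ∉ 1 :: u := fun h =>
      List.disjoint_of_nodup_append hnd₂ h (List.mem_cons_self ..)
    refine ⟨1 :: u ++ n :: d₂, ⟨hnd₂, by simp at hlen ⊢; omega, u, d₂, rfl, ?_, ?_⟩,
      Or.inr (by simpa [adjT, Equiv.swap_comm] using formPerm_append_cons_cons_eq_swap_mul hnodup)⟩
    · obtain ⟨hu₁, -, hu₂⟩ := List.pairwise_append.mp hu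
      refine List.pairwise_append.mpr ⟨hu₁, List.pairwise_singleton .., fun a ha b hb => ?_⟩
      have hlt : a < n + 1 := hu₂ a ha (n + 1) (List.mem_singleton_self _)
      have hne : a ≠ n := by rintro rfl; exact hnotin ha
      simp only [List.mem_singleton] at hb
      omega
    · exact hd.sublist (by simp)

end IsUnimodalCycleWord

theorem isUnimodalCycleWord_two_iff {L : List ℕ} : IsUnimodalCycleWord 2 L ↔ L = [1, 2] := by
  refine ⟨fun hL => ?_, fun h => ⟨by simp [h], by simp [h], [], [], by simp [h], by simp, by simp⟩⟩
  obtain ⟨u, d, rfl, -, -⟩ := hL.exists_split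
  have hlen := hL.length_eq
  simp only [List.cons_append, List.length_cons, List.length_append] at hlen
  simp [List.eq_nil_of_length_eq_zero (show u.length = 0 by omega),
    List.eq_nil_of_length_eq_zero (show d.length = 0 by omega)]

theorem isCoxeterElement_iff_exists_unimodalCycleWord {n : ℕ} (hn : 2 ≤ n) {c : Equiv.Perm ℕ} :
    IsCoxeterElement n c ↔ ∃ L, IsUnimodalCycleWord n L ∧ c = L.formPerm := by
  induction n, hn using Nat.le_induction generalizing c with
  | base => simp [isCoxeterElement_two_iff, isUnimodalCycleWord_two_iff, adjT]
  | succ n hn ih =>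
    simp_rw [isCoxeterElement_succ_iff (by omega : 1 ≤ n), ih]
    constructor
    · rintro ⟨_, ⟨L, hL, rfl⟩, rfl | rfl⟩
      · obtain ⟨L', hL', h⟩ := hL.exists_succ_formPerm_eq_mul_adjT
        exact ⟨L', hL', h.symm⟩
      · obtain ⟨L', hL', h⟩ := hL.exists_succ_formPerm_eq_adjT_mul
        exact ⟨L', hL', h.symm⟩
    · rintro ⟨L, hL, rfl⟩
      obtain ⟨L', hL', h⟩ := hL.exists_formPerm_eq_mul_adjT_or_adjT_mul hn
      exact ⟨_, ⟨L', hL', rfl⟩, h⟩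

theorem unimodal_getD_of_pairwise {n : ℕ} {u d L : List ℕ} (hL : L = 1 :: u ++ n :: d)
    (hlen : L.length = n)
    (hA : (1 :: u ++ [n]).Pairwise (· < ·)) (hD : (n :: d ++ [1]).Pairwise (· > ·)) :
    (∀ k, k + 1 < u.length + 2 → L.getD k 0 < L.getD (k + 1) 0) ∧
      (∀ k, u.length + 2 ≤ k + 1 → k + 1 < n → L.getD (k + 1) 0 < L.getD k 0) ∧
      (∀ k, u.length + 2 ≤ k → k < n → 1 < L.getD k 0) := by
  have hL' : L = (1 :: u ++ [n]) ++ d := by simp [hL]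
  have hlen' : u.length + d.length + 2 = n := by simp [hL] at hlen; omega
  refine ⟨(isChain_take_iff_getD (by omega) 0).mp ?_, fun k hk hk' => ?_, fun k hk hk' => ?_⟩
  · rw [hL', List.take_left' (by simp)]
    exact hA.isChain
  · have hdrop : (L ++ [1]).drop (u.length + 1) = n :: d ++ [1] := by simp [hL]
    have := (isChain_drop_iff_getD _ 0).mp (hdrop ▸ hD.isChain) k (by omega) (by simp; omega)
    rwa [List.getD_append _ _ _ _ (by omega), List.getD_append _ _ _ _ (by omega)] at this
  · have hmem : L.getD k 0 ∈ d := by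
      rw [hL', List.getD_append_right _ _ _ _ (by simp; omega),
        List.getD_eq_getElem _ _ (by simp; omega)]
      exact List.getElem_mem _
    exact (List.pairwise_append.mp (List.pairwise_cons.mp hD).2).2.2 _ hmem 1
      (List.mem_singleton_self _)

theorem exists_eq_cons_append_cons_of_getD {n m : ℕ} {L : List ℕ} (hn : 2 ≤ n)
    (hlen : L.length = n) (hm1 : 1 ≤ m) (hm : m ≤ n) (h0 : L.getD 0 0 = 1)
    (hpeak : L.getD (m - 1) 0 = n) :
    ∃ u d, L = 1 :: u ++ n :: d ∧ u.length + 2 = m := by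
  have hm2 : 2 ≤ m := by
    by_contra
    obtain rfl : m = 1 := by omega
    have : L.getD 0 0 = n := hpeak
    omega
  obtain _ | ⟨x, L'⟩ := L
  · simp at hlen; omega
  obtain ⟨k, rfl⟩ : ∃ k, m = k + 2 := ⟨m - 2, by omega⟩
  simp only [List.getD_cons_zero] at h0
  simp only [show k + 2 - 1 = k + 1 by omega, List.getD_cons_succ] at hpeak
  simp only [List.length_cons] at hlen
  rw [List.getD_eq_getElem _ _ (by omega)] at hpeak
  refine ⟨L'.take k, L'.drop (k + 1), ?_, by simp; omega⟩
  rw [h0, ← hpeak, ← List.drop_eq_getElem_cons, List.cons_append, List.take_append_drop]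

theorem pairwise_of_unimodal_getD {n : ℕ} {u d L : List ℕ} (hn : 2 ≤ n)
    (hL : L = 1 :: u ++ n :: d) (hlen : L.length = n)
    (hasc : ∀ k, k + 1 < u.length + 2 → L.getD k 0 < L.getD (k + 1) 0)
    (hdesc : ∀ k, u.length + 2 ≤ k + 1 → k + 1 < n → L.getD (k + 1) 0 < L.getD k 0)
    (hbig : ∀ k, u.length + 2 ≤ k → k < n → 1 < L.getD k 0) :
    (1 :: u ++ [n]).Pairwise (· < ·) ∧ (n :: d ++ [1]).Pairwise (· > ·) := by
  have hlen' : u.length + d.length + 2 = n := by simp [hL] at hlen; omega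
  have htake : L.take (u.length + 2) = 1 :: u ++ [n] := by
    rw [show L = (1 :: u ++ [n]) ++ d by simp [hL], List.take_left' (by simp)]
  have hdrop : (L ++ [1]).drop (u.length + 1) = n :: d ++ [1] := by simp [hL]
  refine ⟨htake ▸ ((isChain_take_iff_getD (by omega) 0).mpr hasc).pairwise,
    hdrop ▸ ((isChain_drop_iff_getD _ 0).mpr fun k hk hk' => ?_).pairwise⟩
  simp only [List.length_append, List.length_singleton] at hk'
  rw [List.getD_append _ _ _ _ (by omega)]
  rcases Nat.lt_or_ge (k + 1) n with hkn | hkn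
  · rw [List.getD_append _ _ _ _ (by omega)]
    exact hdesc k (by omega) hkn
  · rw [List.getD_append_right _ _ _ _ (by omega), show k + 1 - L.length = 0 by omega]
    rcases Nat.lt_or_ge k (u.length + 2) with hku | hku
    · have hpeak : L.getD k 0 = n := by
        rw [show k = u.length + 1 by omega, hL]; simp
      rw [hpeak]
      exact hn
    · exact hbig k hku (by omega)

/-- For `n ≥ 2`, an element `c` of `S_n` is a Coxeter element iff `c`
is an `n`-cycle `(c_1, c_2, …, c_m, c_{m+1}, …, c_n)` with
`c_1 = 1 < c_2 < … < c_m = n` and `n = c_m > c_{m+1} > … > c_n > 1`. -/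
theorem isCoxeterElement_iff_unimodal_cycle (n : ℕ) (hn : 2 ≤ n)
    (c : Equiv.Perm ℕ) (hc : InSymm n c) :
    IsCoxeterElement n c ↔
      ∃ (L : List ℕ) (m : ℕ), L.length = n ∧ L.Nodup ∧ 1 ≤ m ∧ m ≤ n ∧
        L.getD 0 0 = 1 ∧ L.getD (m - 1) 0 = n ∧
        (∀ k, k + 1 < m → L.getD k 0 < L.getD (k + 1) 0) ∧
        (∀ k, m ≤ k + 1 → k + 1 < n → L.getD (k + 1) 0 < L.getD k 0) ∧
        (∀ k, m ≤ k → k < n → 1 < L.getD k 0) ∧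
        (∀ k, k < n → c (L.getD k 0) = L.getD ((k + 1) % n) 0) := by
  rw [isCoxeterElement_iff_exists_unimodalCycleWord hn]
  constructor
  · rintro ⟨L, hL, rfl⟩
    obtain ⟨u, d, hsplit, hA, hD⟩ := hL.exists_split
    have hlen := hL.length_eq
    obtain ⟨hasc, hdesc, hbig⟩ := unimodal_getD_of_pairwise hsplit hlen hA hD
    refine ⟨L, u.length + 2, hlen, hL.nodup, by omega, by simp [hsplit] at hlen; omega,
      by simp [hsplit], by simp [hsplit], hasc, hdesc, hbig, hlen ▸ ?_⟩
    exact (eq_formPerm_iff_getD 0 hL.nodup fun x hx => List.formPerm_apply_of_notMem hx).mp rfl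
  · rintro ⟨L, m, hlen, hnd, hm1, hmn, h0, hpeak, hasc, hdesc, hbig, hcyc⟩
    obtain ⟨u, d, hsplit, rfl⟩ := exists_eq_cons_append_cons_of_getD hn hlen hm1 hmn h0 hpeak
    obtain ⟨hA, hD⟩ := pairwise_of_unimodal_getD hn hsplit hlen hasc hdesc hbig
    have hL : IsUnimodalCycleWord n L := ⟨hnd, hlen, u, d, hsplit, hA, hD⟩
    refine ⟨L, hL, (eq_formPerm_iff_getD 0 hnd fun x hx => hc x ?_).mpr (hlen ▸ hcyc)⟩
    have := hL.mem_iff.not.mp hx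
    omega

end RSKPaper
end
end

section
/- Let c be a Coxeter element of S_n (n ≥ 2). The sources of the Auslander–Reiten quiver AR(c) are exactly the adjacent transpositions s_i that are initial in c, and the sinks of AR(c) are exactly the adjacent transpositions s_i that are final in c. -/
/-!
A Coxeter element `c = s_{l₁} ⋯ s_{l_{n-1}}` uses every letter once, so a point can pass between
`t` and `t + 1` only when `s_t` is applied, and at most one point does so in each direction.
Writing `c = σ s_i τ` with no other letter used on both sides, this forces `c j ≤ i < j ≤ c i`
to happen only for `j = i + 1`, and a descent `c (i+1) < c i` to happen only as
`c (i+1) ≤ i < c i`. These inequalities say that `(i, j)` has no outgoing arrow, and since the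
Coxeter length is the number of inversions, `s_i` is final in `c` exactly at a descent. Sources of
`AR(c)` are the sinks of `AR(c⁻¹)`, whose arrows are those of `AR(c)` reversed.
-/

noncomputable section

namespace RSKPaper

lemma adjT_apply (i x : ℕ) : adjT i x = if x = i then i + 1 else if x = i + 1 then i else x := by
  simp [adjT, Equiv.swap_apply_def]

lemma adjT_inv (i : ℕ) : (adjT i)⁻¹ = adjT i := Equiv.swap_inv i (i + 1)

lemma adjT_apply_le_iff {a t : ℕ} (h : a ≠ t) (y : ℕ) : adjT a y ≤ t ↔ y ≤ t := by
  rw [adjT_apply]; split_ifs <;> omega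

lemma adjT_lt_adjT_iff {i u v : ℕ} (h : ¬ (u = i ∧ v = i + 1)) (h' : ¬ (u = i + 1 ∧ v = i)) :
    adjT i u < adjT i v ↔ u < v := by
  rw [adjT_apply, adjT_apply]; split_ifs <;> omega

lemma prod_adjT_inv (l : List ℕ) : ((l.map adjT).prod)⁻¹ = (l.reverse.map adjT).prod := by
  simp only [List.prod_inv_reverse, List.map_map, Function.comp_def, adjT_inv, List.map_reverse]

section InSymm

variable {n : ℕ}

lemma InSymm.mul {u v : Equiv.Perm ℕ} (hu : InSymm n u) (hv : InSymm n v) : InSymm n (u * v) :=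
  fun x hx => by rw [Equiv.Perm.mul_apply, hv x hx, hu x hx]

lemma InSymm.inv {w : Equiv.Perm ℕ} (hw : InSymm n w) : InSymm n w⁻¹ :=
  fun x hx => Equiv.Perm.inv_eq_iff_eq.mpr (hw x hx).symm

lemma InSymm.apply_mem_Icc {w : Equiv.Perm ℕ} (hw : InSymm n w) {x : ℕ}
    (hx : x ∈ Finset.Icc 1 n) : w x ∈ Finset.Icc 1 n := by
  rw [Finset.mem_Icc] at hx ⊢
  by_contra h
  have := w.injective (hw (w x) (by omega))
  omega

lemma inSymm_adjT {i : ℕ} (h1 : 1 ≤ i) (hi : i < n) : InSymm n (adjT i) :=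
  fun _ hx => Equiv.swap_apply_of_ne_of_ne (by omega) (by omega)

lemma inSymm_prod_adjT {l : List ℕ} (hl : ∀ i ∈ l, 1 ≤ i ∧ i < n) :
    InSymm n (l.map adjT).prod := by
  induction l with
  | nil => exact fun _ _ => rfl
  | cons a l ih =>
    rw [List.map_cons, List.prod_cons]
    have ha := hl a List.mem_cons_self
    exact (inSymm_adjT ha.1 ha.2).mul (ih fun i hi => hl i (List.mem_cons_of_mem _ hi))

end InSymm

lemma IsCoxeterElement.inSymm {n : ℕ} {c : Equiv.Perm ℕ} (hc : IsCoxeterElement n c) :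
    InSymm n c := by
  obtain ⟨l, hl, rfl⟩ := hc
  exact inSymm_prod_adjT fun i hi => List.Ico.mem.mp (hl.subset hi)

lemma IsCoxeterElement.inv {n : ℕ} {c : Equiv.Perm ℕ} (hc : IsCoxeterElement n c) :
    IsCoxeterElement n c⁻¹ := by
  obtain ⟨l, hl, rfl⟩ := hc
  exact ⟨l.reverse, l.reverse_perm.trans hl, prod_adjT_inv l⟩

def PreservesIic (σ : Equiv.Perm ℕ) (t : ℕ) : Prop := ∀ x, σ x ≤ t ↔ x ≤ t

lemma preservesIic_prod_adjT {l : List ℕ} {t : ℕ} (ht : t ∉ l) :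
    PreservesIic (l.map adjT).prod t := by
  induction l with
  | nil => exact fun _ => Iff.rfl
  | cons a l ih =>
    rw [List.mem_cons, not_or] at ht
    intro x
    rw [List.map_cons, List.prod_cons, Equiv.Perm.mul_apply,
      adjT_apply_le_iff (Ne.symm ht.1), ih ht.2]

/-- Each cut `t` is crossed only by the letter `s_t`, which occurs once, on one side of `s_i`. -/
lemma IsCoxeterElement.exists_split {n : ℕ} {c : Equiv.Perm ℕ} (hc : IsCoxeterElement n c)
    {i : ℕ} (h1 : 1 ≤ i) (hi : i < n) :
    ∃ σ τ : Equiv.Perm ℕ, c = σ * adjT i * τ ∧ PreservesIic σ i ∧ PreservesIic τ i ∧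
      ∀ t, PreservesIic σ t ∨ PreservesIic τ t := by
  obtain ⟨l, hl, rfl⟩ := hc
  obtain ⟨l₁, l₂, rfl⟩ := List.append_of_mem (hl.mem_iff.mpr (List.Ico.mem.mpr ⟨h1, hi⟩))
  have hnd := hl.nodup_iff.mpr (List.Ico.nodup 1 n)
  rw [List.nodup_append, List.nodup_cons] at hnd
  have hdisj : ∀ t ∈ l₁, t ∉ l₂ := fun t ht ht' =>
    hnd.2.2 t ht t (List.mem_cons_of_mem _ ht') rfl
  refine ⟨(l₁.map adjT).prod, (l₂.map adjT).prod, by simp [mul_assoc],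
    preservesIic_prod_adjT fun h => hnd.2.2 i h i List.mem_cons_self rfl,
    preservesIic_prod_adjT hnd.2.1.1, fun t => ?_⟩
  by_cases ht : t ∈ l₁
  · exact Or.inr (preservesIic_prod_adjT (hdisj t ht))
  · exact Or.inl (preservesIic_prod_adjT ht)

section Split

variable {σ τ : Equiv.Perm ℕ} {i : ℕ}

lemma eq_succ_of_split (hσ : PreservesIic σ i) (hτ : PreservesIic τ i)
    (hστ : PreservesIic σ (i + 1) ∨ PreservesIic τ (i + 1)) {j : ℕ} (hij : i < j)
    (hj : (σ * adjT i * τ) j ≤ i) (hi : j ≤ (σ * adjT i * τ) i) : j = i + 1 := by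
  simp only [Equiv.Perm.mul_apply] at hj hi
  have hτi : τ i = i := by
    have h₁ := (hτ i).2 le_rfl
    have h₂ := mt (hσ _).2 (by omega : ¬ σ (adjT i (τ i)) ≤ i)
    rw [adjT_apply] at h₂; split_ifs at h₂ <;> omega
  have hτj : τ j = i + 1 := by
    have h₁ := mt (hτ j).1 (by omega)
    have h₂ := (hσ _).1 hj
    rw [adjT_apply] at h₂; split_ifs at h₂ <;> omega
  rw [hτi, adjT_apply, if_pos rfl] at hi
  rcases hστ with h | h
  · have := (h _).2 le_rfl; omega
  · have := (h j).1 (by omega); omega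

lemma le_and_lt_of_split (h1 : 1 ≤ i) (hσ : PreservesIic σ i) (hτ : PreservesIic τ i)
    (hστ : ∀ t, PreservesIic σ t ∨ PreservesIic τ t)
    (hd : (σ * adjT i * τ) (i + 1) < (σ * adjT i * τ) i) :
    (σ * adjT i * τ) (i + 1) ≤ i ∧ i < (σ * adjT i * τ) i := by
  simp only [Equiv.Perm.mul_apply] at hd ⊢
  have hτi₁ := (hτ i).2 le_rfl
  have hτi₂ := mt (hτ (i + 1)).1 (by omega)
  have hτi : τ i = i := by
    by_contra hne
    rcases hστ (i - 1) with h | h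
    · have ha := (h (adjT i (τ i))).2 (by rw [adjT_apply]; split_ifs <;> omega)
      have hb := mt (h (adjT i (τ (i + 1)))).1 (by rw [adjT_apply]; split_ifs <;> omega)
      omega
    · have := (h i).1 (by omega); omega
  have hτi1 : τ (i + 1) = i + 1 := by
    by_contra hne
    rcases hστ (i + 1) with h | h
    · have ha := (h (adjT i (τ i))).2 (by rw [hτi, adjT_apply, if_pos rfl])
      have hb := mt (h (adjT i (τ (i + 1)))).1 (by rw [adjT_apply]; split_ifs <;> omega)
      omega
    · have := (h (i + 1)).2 le_rfl; omega
  rw [hτi, hτi1, adjT_apply, adjT_apply]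
  simp only [if_pos, if_neg (by omega : i + 1 ≠ i)]
  exact ⟨(hσ i).2 le_rfl, lt_of_not_ge (mt (hσ (i + 1)).1 (by omega))⟩

end Split

lemma IsCoxeterElement.le_and_le_iff {n : ℕ} {c : Equiv.Perm ℕ} (hc : IsCoxeterElement n c)
    {i j : ℕ} (h1 : 1 ≤ i) (hij : i < j) (hjn : j ≤ n) :
    c j ≤ i ∧ j ≤ c i ↔ j = i + 1 ∧ c (i + 1) < c i := by
  obtain ⟨σ, τ, rfl, hσ, hτ, hστ⟩ := hc.exists_split h1 (by omega)
  constructor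
  · rintro ⟨hj, hi⟩
    obtain rfl := eq_succ_of_split hσ hτ (hστ _) hij hj hi
    exact ⟨rfl, by omega⟩
  · rintro ⟨rfl, hd⟩
    have := le_and_lt_of_split h1 hσ hτ hστ hd
    omega

lemma card_filter_eq_add_one {α : Type*} {s : Finset α} {P Q : α → Prop} [DecidablePred P]
    [DecidablePred Q] {a : α} (ha : a ∈ s) (hP : ¬ P a) (hQ : Q a)
    (h : ∀ x ∈ s, x ≠ a → (Q x ↔ P x)) : (s.filter Q).card = (s.filter P).card + 1 := by
  classical
  rw [← Finset.card_insert_of_notMem (s := s.filter P) (a := a) (by simp [hP])]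
  congr 1
  ext x
  simp only [Finset.mem_filter, Finset.mem_insert]
  by_cases hx : x = a
  · subst hx; simp [ha, hQ]
  · simp only [hx, false_or]
    exact and_congr_right (h x · hx)

def invCount (n : ℕ) (w : Equiv.Perm ℕ) : ℕ :=
  ((Finset.Icc 1 n ×ˢ Finset.Icc 1 n).filter fun p => p.1 < p.2 ∧ w p.2 < w p.1).card

section Length

variable {n : ℕ} {w : Equiv.Perm ℕ} {i : ℕ}

lemma invCount_one : invCount n 1 = 0 := by
  rw [invCount, Finset.card_eq_zero, Finset.filter_eq_empty_iff]
  intro p _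
  simp only [Equiv.Perm.one_apply]
  omega

/-- Left multiplication by `s_i` only flips the relative order of the positions of `i` and `i+1`. -/
lemma invCount_adjT_mul (hw : InSymm n w) (h1 : 1 ≤ i) (hi : i < n)
    (h : w⁻¹ i < w⁻¹ (i + 1)) : invCount n (adjT i * w) = invCount n w + 1 := by
  apply card_filter_eq_add_one (a := (w⁻¹ i, w⁻¹ (i + 1)))
  · exact Finset.mem_product.mpr ⟨hw.inv.apply_mem_Icc (Finset.mem_Icc.mpr ⟨h1, hi.le⟩),
      hw.inv.apply_mem_Icc (Finset.mem_Icc.mpr ⟨by omega, hi⟩)⟩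
  · simp
  · simpa [adjT_apply] using h
  · rintro ⟨a, b⟩ - hne
    simp only [Equiv.Perm.mul_apply]
    refine and_congr_right fun hab => adjT_lt_adjT_iff ?_ ?_
    · rintro ⟨hb, ha⟩
      rw [← Equiv.Perm.eq_inv_iff_eq] at ha hb
      subst ha hb
      exact absurd hab (not_lt.mpr h.le)
    · rintro ⟨hb, ha⟩
      rw [← Equiv.Perm.eq_inv_iff_eq] at ha hb
      exact hne (by rw [ha, hb])

lemma invCount_adjT_mul_add_one (hw : InSymm n w) (h1 : 1 ≤ i) (hi : i < n)
    (h : w⁻¹ (i + 1) < w⁻¹ i) : invCount n (adjT i * w) + 1 = invCount n w := by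
  have key := invCount_adjT_mul ((inSymm_adjT h1 hi).mul hw) h1 hi (by
    simpa [mul_inv_rev, adjT_inv, adjT_apply] using h)
  rwa [← mul_assoc, show adjT i * adjT i = 1 from Equiv.swap_mul_self _ _, one_mul,
    eq_comm] at key

lemma invCount_prod_adjT_le {l : List ℕ} (hl : ∀ i ∈ l, 1 ≤ i ∧ i < n) :
    invCount n (l.map adjT).prod ≤ l.length := by
  induction l with
  | nil => simp [invCount_one]
  | cons a l ih =>
    have ha := hl a List.mem_cons_self
    have hl' := fun i hi => hl i (List.mem_cons_of_mem a hi)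
    have hw := inSymm_prod_adjT hl'
    have := ih hl'
    rw [List.map_cons, List.prod_cons, List.length_cons]
    rcases lt_trichotomy ((l.map adjT).prod⁻¹ a) ((l.map adjT).prod⁻¹ (a + 1)) with h | h | h
    · rw [invCount_adjT_mul hw ha.1 ha.2 h]; omega
    · simp at h
    · have := invCount_adjT_mul_add_one hw ha.1 ha.2 h; omega

lemma exists_descent {v : Equiv.Perm ℕ} (hv : InSymm n v) (hne : v ≠ 1) :
    ∃ i, 1 ≤ i ∧ i < n ∧ v (i + 1) < v i := by
  by_contra! hmono
  have hle : ∀ k ∈ Finset.Icc 1 n, k ≤ v k := by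
    intro k hk
    induction k with
    | zero => simp at hk
    | succ k ih =>
      rcases Nat.eq_zero_or_pos k with rfl | hk0
      · exact (Finset.mem_Icc.mp (hv.apply_mem_Icc hk)).1
      · have hk' := Finset.mem_Icc.mp hk
        have h₁ := ih (Finset.mem_Icc.mpr ⟨hk0, by omega⟩)
        have h₂ := hmono k hk0 (by omega)
        have h₃ : v k ≠ v (k + 1) := fun h => by simpa using v.injective h
        omega
  have hsum : ∑ k ∈ Finset.Icc 1 n, k = ∑ k ∈ Finset.Icc 1 n, v k :=
    (Equiv.Perm.sum_comp v _ id fun x hx => by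
      by_contra h
      have : x = 0 ∨ n < x := by rw [Finset.coe_Icc, Set.mem_Icc] at h; omega
      exact hx (hv x this)).symm
  have hfix := (Finset.sum_eq_sum_iff_of_le hle).mp hsum
  refine hne (Equiv.ext fun x => ?_)
  by_cases hx : x ∈ Finset.Icc 1 n
  · exact (hfix x hx).symm
  · exact hv x (by rw [Finset.mem_Icc] at hx; omega)

lemma exists_word_length_invCount (hw : InSymm n w) :
    ∃ l : List ℕ, l.length = invCount n w ∧ (∀ i ∈ l, 1 ≤ i ∧ i < n) ∧ w = (l.map adjT).prod := by
  induction h : invCount n w generalizing w with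
  | zero =>
    refine ⟨[], rfl, by simp, ?_⟩
    by_contra hne
    obtain ⟨i, h1, hi, hd⟩ := exists_descent hw.inv (inv_ne_one.mpr hne)
    have := invCount_adjT_mul_add_one hw h1 hi hd
    omega
  | succ k ih =>
    have hne : w⁻¹ ≠ 1 := inv_ne_one.mpr fun h1 => by simp [h1, invCount_one] at h
    obtain ⟨i, h1, hi, hd⟩ := exists_descent hw.inv hne
    have hk := invCount_adjT_mul_add_one hw h1 hi hd
    obtain ⟨l, hlen, hl, hprod⟩ := ih ((inSymm_adjT h1 hi).mul hw) (by omega)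
    refine ⟨i :: l, by simp [hlen], ?_, ?_⟩
    · simpa [h1, hi] using hl
    · rw [List.map_cons, List.prod_cons, ← hprod, ← mul_assoc,
        show adjT i * adjT i = 1 from Equiv.swap_mul_self _ _, one_mul]

lemma lenS_eq_invCount (hw : InSymm n w) : lenS n w = invCount n w := by
  obtain ⟨l, hlen, hl, hprod⟩ := exists_word_length_invCount hw
  refine le_antisymm (Nat.sInf_le ⟨l, hlen, hl, hprod⟩) (le_csInf ⟨_, l, hlen, hl, hprod⟩ ?_)
  rintro k ⟨m, rfl, hm, rfl⟩
  exact invCount_prod_adjT_le hm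

lemma isInitialIn_iff (hw : InSymm n w) (h1 : 1 ≤ i) (hi : i < n) :
    IsInitialIn n i w ↔ w⁻¹ (i + 1) < w⁻¹ i := by
  rw [IsInitialIn, lenS_eq_invCount ((inSymm_adjT h1 hi).mul hw), lenS_eq_invCount hw]
  rcases lt_trichotomy (w⁻¹ i) (w⁻¹ (i + 1)) with h | h | h
  · rw [invCount_adjT_mul hw h1 hi h]; omega
  · simp at h
  · have := invCount_adjT_mul_add_one hw h1 hi h; omega

end Length

lemma lenS_inv (n : ℕ) (w : Equiv.Perm ℕ) : lenS n w⁻¹ = lenS n w := by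
  unfold lenS
  congr 1
  ext k
  constructor <;> rintro ⟨l, hlen, hl, hw⟩ <;>
    refine ⟨l.reverse, by simpa using hlen, fun i hi => hl i (List.mem_reverse.mp hi), ?_⟩
  · rw [← prod_adjT_inv, ← hw, inv_inv]
  · rw [← prod_adjT_inv, ← hw]

lemma isInitialIn_iff_isFinalIn_inv {n i : ℕ} {w : Equiv.Perm ℕ} :
    IsInitialIn n i w ↔ IsFinalIn n i w⁻¹ := by
  rw [IsInitialIn, IsFinalIn, ← lenS_inv n (adjT i * w), ← lenS_inv n w, mul_inv_rev, adjT_inv]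

lemma isFinalIn_iff {n i : ℕ} {w : Equiv.Perm ℕ} (hw : InSymm n w) (h1 : 1 ≤ i) (hi : i < n) :
    IsFinalIn n i w ↔ w (i + 1) < w i := by
  simpa using (isInitialIn_iff_isFinalIn_inv (w := w⁻¹)).symm.trans (isInitialIn_iff hw.inv h1 hi)

section Quiver

variable {n : ℕ} {c : Equiv.Perm ℕ} {p : ℕ × ℕ}

lemma arArrow_inv_iff {q : ℕ × ℕ} : ARArrow n c⁻¹ p q ↔ ARArrow n c q p := by
  obtain ⟨a, b⟩ := p
  obtain ⟨a', b'⟩ := q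
  simp only [ARArrow, ARVertex, Prod.mk.injEq]
  constructor
  · rintro ⟨hp, hq, ⟨-, rfl, rfl⟩ | ⟨-, rfl, rfl⟩⟩ <;> simp_all
  · rintro ⟨hq, hp, ⟨-, rfl, rfl⟩ | ⟨-, rfl, rfl⟩⟩ <;> simp_all

lemma InSymm.forall_not_arArrow_iff (hc : InSymm n c) (hp : ARVertex n p) :
    (∀ q, ¬ ARArrow n c p q) ↔ c p.2 ≤ p.1 ∧ p.2 ≤ c p.1 := by
  obtain ⟨h1, h12, h2n⟩ := hp
  have hc1 := Finset.mem_Icc.mp (hc.apply_mem_Icc (Finset.mem_Icc.mpr ⟨h1, by omega⟩))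
  have hc2 := Finset.mem_Icc.mp (hc.apply_mem_Icc (Finset.mem_Icc.mpr ⟨by omega, h2n⟩))
  constructor
  · intro h
    by_contra hne
    rcases not_and_or.mp hne with h' | h'
    · exact h (p.1, c p.2) ⟨⟨h1, h12, h2n⟩, ⟨h1, by omega, hc2.2⟩, Or.inl ⟨by omega, rfl⟩⟩
    · exact h (c p.1, p.2) ⟨⟨h1, h12, h2n⟩, ⟨hc1.1, by omega, h2n⟩, Or.inr ⟨by omega, rfl⟩⟩
  · rintro ⟨h, h'⟩ q ⟨-, -, ⟨hlt, -⟩ | ⟨hlt, -⟩⟩ <;> omega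

lemma IsCoxeterElement.forall_not_arArrow_iff (hc : IsCoxeterElement n c) (hp : ARVertex n p) :
    (∀ q, ¬ ARArrow n c p q) ↔ p.2 = p.1 + 1 ∧ IsFinalIn n p.1 c := by
  rw [hc.inSymm.forall_not_arArrow_iff hp, hc.le_and_le_iff hp.1 hp.2.1 hp.2.2]
  refine and_congr_right fun h => (isFinalIn_iff hc.inSymm hp.1 ?_).symm
  have := hp.2.2
  omega

end Quiver

theorem AR_sources_sinks_general (n : ℕ) (c : Equiv.Perm ℕ) (hcox : IsCoxeterElement n c) :
    ∀ p : ℕ × ℕ, ARVertex n p →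
      ((∀ q : ℕ × ℕ, ¬ ARArrow n c q p) ↔ p.2 = p.1 + 1 ∧ IsInitialIn n p.1 c) ∧
      ((∀ q : ℕ × ℕ, ¬ ARArrow n c p q) ↔ p.2 = p.1 + 1 ∧ IsFinalIn n p.1 c) := by
  intro p hp
  refine ⟨?_, hcox.forall_not_arArrow_iff hp⟩
  rw [isInitialIn_iff_isFinalIn_inv, ← hcox.inv.forall_not_arArrow_iff hp]
  exact forall_congr' fun q => not_congr arArrow_inv_iff.symm

/-- For a Coxeter element `c` of `S_n` (`n ≥ 2`), the sources of
`AR(c)` are exactly the adjacent transpositions `s_i = (i, i+1)` initial in `c`, and the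
sinks of `AR(c)` are exactly the adjacent transpositions final in `c`. -/
theorem AR_sources_sinks (n : ℕ) (hn : 2 ≤ n) (c : Equiv.Perm ℕ)
    (hc : InSymm n c) (hcox : IsCoxeterElement n c) :
    ∀ p : ℕ × ℕ, ARVertex n p →
      ((∀ q : ℕ × ℕ, ¬ ARArrow n c q p) ↔ p.2 = p.1 + 1 ∧ IsInitialIn n p.1 c) ∧
      ((∀ q : ℕ × ℕ, ¬ ARArrow n c p q) ↔ p.2 = p.1 + 1 ∧ IsFinalIn n p.1 c) :=
  AR_sources_sinks_general n c hcox
end RSKPaper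
end
end

section
/- Let c be a Coxeter element of S_n (n ≥ 2) and let 1 ≤ m ≤ n−1. Then the directed graph AR_m(c) has exactly one source and exactly one sink. -/
/-! Write `S = [1, m]` and `T = [m + 1, n]`. A Coxeter element factors as `c = u s_m v`, where `u`
and `v` are products of the `s_j` with `j ≠ m`, so both preserve `S` and `T`. Hence the only
`i ∈ S` with `c i ∈ T` is `v⁻¹ m`, and the only `j ∈ T` with `c j ∈ S` is `v⁻¹ (m + 1)`.
A vertex `(i, j)` of `AR_m(c)` is a sink exactly when both of its arrows leave `AR_m(c)`,
i.e. when `c i > m` and `c j ≤ m`, so `(v⁻¹ m, v⁻¹ (m + 1))` is the only sink. Reversing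
all arrows of `AR(c)` gives `AR(c⁻¹)`, and `c⁻¹` is again a Coxeter element, so the sources
of `AR_m(c)` are the sinks of `AR_m(c⁻¹)`. -/

noncomputable section

namespace RSKPaper

open Equiv MulAction Set
open scoped Pointwise

lemma swap_mem_stabilizer {α : Type*} [DecidableEq α] {s : Set α} {x y : α}
    (h : x ∈ s ↔ y ∈ s) : swap x y ∈ stabilizer (Perm α) s := by
  refine mem_stabilizer_set.2 fun b => ?_
  rw [Perm.smul_def]
  rcases eq_or_ne b x with rfl | hbx
  · rw [swap_apply_left, h]
  rcases eq_or_ne b y with rfl | hby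
  · rw [swap_apply_right, h]
  · rw [swap_apply_of_ne_of_ne hbx hby]

lemma adjT_mem_stabilizer_Icc {a b i : ℕ} (ha : i + 1 ≠ a) (hb : i ≠ b) :
    adjT i ∈ stabilizer (Perm ℕ) (Icc a b) :=
  swap_mem_stabilizer <| by simp only [mem_Icc]; omega

lemma closure_adjT_le_stabilizer_Icc {a b : ℕ} {S : Set ℕ} (hS : ∀ i ∈ S, i + 1 ≠ a ∧ i ≠ b) :
    Subgroup.closure (adjT '' S) ≤ stabilizer (Perm ℕ) (Icc a b) :=
  Subgroup.closure_le _ |>.2 <| by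
    rintro _ ⟨i, hi, rfl⟩
    exact adjT_mem_stabilizer_Icc (hS i hi).1 (hS i hi).2

lemma apply_mem_of_mem_stabilizer {α : Type*} {s : Set α} {w : Perm α}
    (hw : w ∈ stabilizer (Perm α) s) {x : α} (hx : x ∈ s) : w x ∈ s :=
  (mem_stabilizer_set.1 hw x).2 hx

section Crossing

variable {n m : ℕ} {u v : Perm ℕ}

lemma lt_mul_adjT_mul_apply_iff (hu₁ : u ∈ stabilizer (Perm ℕ) (Icc 1 m))
    (hu₂ : u ∈ stabilizer (Perm ℕ) (Icc (m + 1) n)) (hmn : m < n)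
    (hv : v ∈ stabilizer (Perm ℕ) (Icc 1 m))
    {x : ℕ} (hx : x ∈ Icc 1 m) : m < (u * adjT m * v) x ↔ v x = m := by
  have hvx := (apply_mem_of_mem_stabilizer hv hx).2
  simp only [Perm.mul_apply, adjT]
  by_cases h : v x = m
  · rw [h, swap_apply_left]
    have := apply_mem_of_mem_stabilizer hu₂ (⟨le_rfl, hmn⟩ : m + 1 ∈ Icc (m + 1) n)
    simp only [mem_Icc] at this
    omega
  · rw [swap_apply_of_ne_of_ne h (by omega)]
    have := apply_mem_of_mem_stabilizer hu₁ (apply_mem_of_mem_stabilizer hv hx)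
    simp only [mem_Icc] at this
    omega

lemma mul_adjT_mul_apply_le_iff (hu₁ : u ∈ stabilizer (Perm ℕ) (Icc 1 m))
    (hu₂ : u ∈ stabilizer (Perm ℕ) (Icc (m + 1) n)) (hm : 1 ≤ m)
    (hv : v ∈ stabilizer (Perm ℕ) (Icc (m + 1) n))
    {x : ℕ} (hx : x ∈ Icc (m + 1) n) : (u * adjT m * v) x ≤ m ↔ v x = m + 1 := by
  have hvx := (apply_mem_of_mem_stabilizer hv hx).1
  simp only [Perm.mul_apply, adjT]
  by_cases h : v x = m + 1
  · rw [h, swap_apply_right]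
    have := apply_mem_of_mem_stabilizer hu₁ (⟨hm, le_rfl⟩ : m ∈ Icc 1 m)
    simp only [mem_Icc] at this
    omega
  · rw [swap_apply_of_ne_of_ne (by omega) h]
    have := apply_mem_of_mem_stabilizer hu₂ (apply_mem_of_mem_stabilizer hv hx)
    simp only [mem_Icc] at this
    omega

end Crossing

lemma isSink_ARm_iff {n m : ℕ} {c : Perm ℕ} (hc : MapsTo c (Icc 1 n) (Icc 1 n)) {p : ℕ × ℕ}
    (hp : p ∈ ARmSet n m) :
    (∀ q ∈ ARmSet n m, ¬ ARArrow n c p q) ↔ m < c p.1 ∧ c p.2 ≤ m := by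
  obtain ⟨⟨hp₁, hp₁₂, hp₂⟩, hpm₁, hpm₂⟩ := hp
  have hc₁ := hc (⟨hp₁, by omega⟩ : p.1 ∈ Icc 1 n)
  have hc₂ := hc (⟨by omega, hp₂⟩ : p.2 ∈ Icc 1 n)
  simp only [mem_Icc] at hc₁ hc₂
  constructor
  · intro h
    constructor
    · by_contra! hle
      exact h (c p.1, p.2) ⟨⟨hc₁.1, by omega, hp₂⟩, hle, hpm₂⟩
        ⟨⟨hp₁, hp₁₂, hp₂⟩, ⟨hc₁.1, by omega, hp₂⟩, Or.inr ⟨by omega, rfl⟩⟩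
    · by_contra! hlt
      exact h (p.1, c p.2) ⟨⟨hp₁, by omega, hc₂.2⟩, hpm₁, hlt⟩
        ⟨⟨hp₁, hp₁₂, hp₂⟩, ⟨hp₁, by omega, hc₂.2⟩, Or.inl ⟨by omega, rfl⟩⟩
  · rintro ⟨h₁, h₂⟩ q ⟨-, hq₁, hq₂⟩ ⟨-, -, ⟨-, rfl⟩ | ⟨-, rfl⟩⟩ <;> simp only at hq₁ hq₂ <;> omega

lemma ARArrow_inv_iff {n : ℕ} {c : Perm ℕ} {p q : ℕ × ℕ} :
    ARArrow n c⁻¹ p q ↔ ARArrow n c q p := by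
  obtain ⟨p₁, p₂⟩ := p
  obtain ⟨q₁, q₂⟩ := q
  simp only [ARArrow, ARVertex, Prod.mk.injEq]
  constructor
  · rintro ⟨hp, hq, ⟨-, rfl, rfl⟩ | ⟨-, rfl, rfl⟩⟩ <;> simp_all
  · rintro ⟨hq, hp, ⟨-, rfl, rfl⟩ | ⟨-, rfl, rfl⟩⟩ <;> simp_all

namespace IsCoxeterElement

variable {n m : ℕ} {c : Perm ℕ}

lemma inv_s10 (hc : IsCoxeterElement n c) : IsCoxeterElement n c⁻¹ := by
  obtain ⟨l, hl, rfl⟩ := hc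
  refine ⟨l.reverse, l.reverse_perm.trans hl, ?_⟩
  have hinv : (fun x => x⁻¹) ∘ adjT = adjT := funext fun i => swap_inv i (i + 1)
  rw [List.prod_inv_reverse, List.map_map, hinv, List.map_reverse]

lemma exists_eq_mul_adjT_mul (hc : IsCoxeterElement n c) (hm : m ∈ Ico 1 n) :
    ∃ u ∈ Subgroup.closure (adjT '' {i | 1 ≤ i ∧ i < n ∧ i ≠ m}),
      ∃ v ∈ Subgroup.closure (adjT '' {i | 1 ≤ i ∧ i < n ∧ i ≠ m}), c = u * adjT m * v := by
  obtain ⟨l, hl, rfl⟩ := hc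
  obtain ⟨l₁, l₂, rfl⟩ := List.append_of_mem (hl.mem_iff.2 (List.Ico.mem.2 hm))
  have hm_notMem : m ∉ l₁ ++ l₂ :=
    (List.nodup_cons.1 (List.nodup_middle.1 (hl.nodup_iff.2 (List.Ico.nodup 1 n)))).1
  have hmem : ∀ j ∈ l₁ ++ l₂,
      adjT j ∈ Subgroup.closure (adjT '' {i | 1 ≤ i ∧ i < n ∧ i ≠ m}) := by
    intro j hj
    have hj_Ico := List.Ico.mem.1 <| hl.subset <| List.mem_append.2 <|
      (List.mem_append.1 hj).imp id (List.mem_cons_of_mem m)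
    exact Subgroup.subset_closure
      ⟨j, ⟨hj_Ico.1, hj_Ico.2, by rintro rfl; exact hm_notMem hj⟩, rfl⟩
  refine ⟨(l₁.map adjT).prod, list_prod_mem ?_, (l₂.map adjT).prod, list_prod_mem ?_, ?_⟩
  · simpa only [List.forall_mem_map] using fun j hj => hmem j (List.mem_append_left _ hj)
  · simpa only [List.forall_mem_map] using fun j hj => hmem j (List.mem_append_right _ hj)
  · simp [mul_assoc]

theorem existsUnique_sink_ARm (hc : IsCoxeterElement n c) (hm : 1 ≤ m) (hmn : m < n) :
    ∃! p : ℕ × ℕ, p ∈ ARmSet n m ∧ ∀ q ∈ ARmSet n m, ¬ ARArrow n c p q := by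
  obtain ⟨u, hu, v, hv, rfl⟩ := hc.exists_eq_mul_adjT_mul ⟨hm, hmn⟩
  have hlow := closure_adjT_le_stabilizer_Icc (a := 1) (b := m)
    (S := {i | 1 ≤ i ∧ i < n ∧ i ≠ m}) fun _ ⟨_, _, _⟩ => by omega
  have hhigh := closure_adjT_le_stabilizer_Icc (a := m + 1) (b := n)
    (S := {i | 1 ≤ i ∧ i < n ∧ i ≠ m}) fun _ ⟨_, _, _⟩ => by omega
  have hall := closure_adjT_le_stabilizer_Icc (a := 1) (b := n)
    (S := {i | 1 ≤ i ∧ i < n ∧ i ≠ m}) fun _ ⟨_, _, _⟩ => by omega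
  have hmaps : MapsTo (u * adjT m * v) (Icc 1 n) (Icc 1 n) := fun x hx =>
    apply_mem_of_mem_stabilizer (mul_mem (mul_mem (hall hu)
      (adjT_mem_stabilizer_Icc (by omega) (by omega))) (hall hv)) hx
  have hsink : ∀ p ∈ ARmSet n m, (m < (u * adjT m * v) p.1 ∧ (u * adjT m * v) p.2 ≤ m ↔
      p = (v⁻¹ m, v⁻¹ (m + 1))) := by
    rintro ⟨i, j⟩ ⟨⟨hi, -, hj⟩, him, hjm⟩
    rw [lt_mul_adjT_mul_apply_iff (hlow hu) (hhigh hu) hmn (hlow hv) ⟨hi, him⟩,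
      mul_adjT_mul_apply_le_iff (hlow hu) (hhigh hu) hm (hhigh hv) ⟨hjm, hj⟩,
      ← Perm.eq_inv_iff_eq, ← Perm.eq_inv_iff_eq, Prod.mk.injEq]
  have hmem : (v⁻¹ m, v⁻¹ (m + 1)) ∈ ARmSet n m := by
    have hi := apply_mem_of_mem_stabilizer (inv_mem (hlow hv)) (⟨hm, le_rfl⟩ : m ∈ Icc 1 m)
    have hj := apply_mem_of_mem_stabilizer (inv_mem (hhigh hv))
      (⟨le_rfl, hmn⟩ : m + 1 ∈ Icc (m + 1) n)
    simp only [mem_Icc] at hi hj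
    exact ⟨⟨hi.1, by omega, hj.2⟩, hi.2, hj.1⟩
  refine ⟨_, ⟨hmem, (isSink_ARm_iff hmaps hmem).2 ((hsink _ hmem).2 rfl)⟩, ?_⟩
  rintro p ⟨hp, hp_sink⟩
  exact (hsink p hp).1 ((isSink_ARm_iff hmaps hp).1 hp_sink)

end IsCoxeterElement

theorem ARm_unique_source_sink_general (n : ℕ) (c : Equiv.Perm ℕ)
    (hcox : IsCoxeterElement n c)
    (m : ℕ) (hm1 : 1 ≤ m) (hm2 : m ≤ n - 1) :
    (∃! p : ℕ × ℕ, p ∈ ARmSet n m ∧ ∀ q ∈ ARmSet n m, ¬ ARArrow n c q p) ∧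
    (∃! p : ℕ × ℕ, p ∈ ARmSet n m ∧ ∀ q ∈ ARmSet n m, ¬ ARArrow n c p q) := by
  have hmn : m < n := by omega
  refine ⟨?_, hcox.existsUnique_sink_ARm hm1 hmn⟩
  simpa only [ARArrow_inv_iff] using hcox.inv_s10.existsUnique_sink_ARm hm1 hmn

/-- For a Coxeter element `c` of `S_n` (`n ≥ 2`) and `1 ≤ m ≤ n - 1`,
the full subquiver `AR_m(c)` has exactly one source and exactly one sink. -/
theorem ARm_unique_source_sink (n : ℕ) (hn : 2 ≤ n) (c : Equiv.Perm ℕ)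
    (hc : InSymm n c) (hcox : IsCoxeterElement n c)
    (m : ℕ) (hm1 : 1 ≤ m) (hm2 : m ≤ n - 1) :
    (∃! p : ℕ × ℕ, p ∈ ARmSet n m ∧ ∀ q ∈ ARmSet n m, ¬ ARArrow n c q p) ∧
    (∃! p : ℕ × ℕ, p ∈ ARmSet n m ∧ ∀ q ∈ ARmSet n m, ¬ ARArrow n c p q) :=
  ARm_unique_source_sink_general n c hcox m hm1 hm2

end RSKPaper
end
end
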